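/- There is no pair (λ, ν) ∈ [0,∞)⁴ × [0,∞)⁴ with λ_j = λ_{j+2} for all j ∈ {0,1} satisfying the system: for every j ∈ {0,1,2,3} (indices taken modulo 4), −λ_j·log(λ_j) + (9/10)·λ_j − (2/5)·(λ_{j+1} + λ_{j+3}) − (1/10)·λ_{j+2} − ν_j = 0; 0 < ∑_{k=0}^{3} λ_k² < 4; and λ_j·ν_j = 0 for every j ∈ {0,1,2,3}. -/

import Mathlib

/-!
Put `a = λ₀ = λ₂` and `b = λ₁ = λ₃`. The system collapses to
`a log a = 4/5 (a - b) - ν₀`, `b log b = 4/5 (b - a) - ν₁` with `0 < a² + b² < 2`.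
If one of `a, b` vanishes, so does the other, contradicting `a² + b² > 0`; otherwise `ν = 0`.
Then `a = b` forces `log a = 0`, i.e. `a² + b² = 2`. If `a < b`, subtracting the equations gives
`b log b - a log a = 8/5 (b - a)`, and the tangent line of the convex function `x log x` at `b`
yields `log b ≥ 3/5`, so `b² ≥ exp (6/5) > 2`.
-/

open Real

lemma mul_log_sub_mul_log_le {x y : ℝ} (hx : 0 < x) (hy : 0 < y) :
    x * log x - y * log y ≤ (x - y) * (1 + log x) := by
  have hlog : log x - log y ≤ x / y - 1 := by
    simpa [log_div hx.ne' hy.ne'] using log_le_sub_one_of_pos (div_pos hx hy)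
  have hy_mul : y * (x / y - 1) = x - y := by field_simp
  nlinarith [mul_le_mul_of_nonneg_left hlog hy.le]

lemma exp_sub_one_le_of_mul_log_sub_mul_log_eq {x y c : ℝ} (hy : 0 < y) (hyx : y < x)
    (h : x * log x - y * log y = c * (x - y)) : exp (c - 1) ≤ x := by
  have hx : 0 < x := hy.trans hyx
  have hslope : c * (x - y) ≤ (x - y) * (1 + log x) := h ▸ mul_log_sub_mul_log_le hx hy
  have hc : c ≤ 1 + log x := by nlinarith [sub_pos.mpr hyx]
  exact (le_log_iff_exp_le hx).mp (by linarith)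

lemma two_lt_sq_of_mul_log_sub_mul_log_eq {x y : ℝ} (hy : 0 < y) (hyx : y < x)
    (h : x * log x - y * log y = 8/5 * (x - y)) : 2 < x ^ 2 := by
  have hx : exp (3/5) ≤ x := by
    simpa [show (8 : ℝ) / 5 - 1 = 3 / 5 by norm_num] using
      exp_sub_one_le_of_mul_log_sub_mul_log_eq hy hyx h
  calc (2 : ℝ) < 6/5 + 1 := by norm_num
    _ ≤ exp (6/5) := add_one_le_exp _
    _ = exp (3/5) ^ 2 := by rw [← exp_nat_mul]; norm_num
    _ ≤ x ^ 2 := pow_le_pow_left₀ (exp_pos _).le hx 2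

lemma eq_one_of_mul_log_eq_zero {a : ℝ} (ha : 0 < a) (h : a * log a = 0) : a = 1 := by
  have hlog : log a = 0 := (mul_eq_zero.mp h).resolve_left ha.ne'
  rcases log_eq_zero.mp hlog with h0 | h1 | hneg
  · exact absurd h0 ha.ne'
  · exact h1
  · linarith

lemma kkt_pair_not_solvable {a b ν₀ ν₁ : ℝ} (ha : 0 ≤ a) (hb : 0 ≤ b) (hν₀ : 0 ≤ ν₀)
    (hν₁ : 0 ≤ ν₁) (h₀ : a * log a = 4/5 * (a - b) - ν₀) (h₁ : b * log b = 4/5 * (b - a) - ν₁)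
    (hc₀ : a * ν₀ = 0) (hc₁ : b * ν₁ = 0) (hpos : 0 < a ^ 2 + b ^ 2) (hlt : a ^ 2 + b ^ 2 < 2) :
    False := by
  wlog hab : a ≤ b generalizing a b ν₀ ν₁
  · exact this hb ha hν₁ hν₀ h₁ h₀ hc₁ hc₀ (by linarith) (by linarith) (le_of_not_ge hab)
  have ha_pos : 0 < a := by
    rcases ha.lt_or_eq with ha_pos | rfl
    · exact ha_pos
    · have hb0 : b = 0 := by simp only [zero_mul] at h₀; linarith
      simp [hb0] at hpos
  have hb_pos : 0 < b := ha_pos.trans_le hab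
  have hν₀0 : ν₀ = 0 := (mul_eq_zero.mp hc₀).resolve_left ha_pos.ne'
  have hν₁0 : ν₁ = 0 := (mul_eq_zero.mp hc₁).resolve_left hb_pos.ne'
  subst hν₀0 hν₁0
  rcases hab.lt_or_eq with hab | rfl
  · have hb_sq := two_lt_sq_of_mul_log_sub_mul_log_eq ha_pos hab (by linarith)
    nlinarith
  · have ha_one := eq_one_of_mul_log_eq_zero ha_pos (by linarith)
    subst ha_one
    norm_num at hlt

theorem kkt_Z4_opposite_equal :
    ¬ ∃ (l ν : ZMod 4 → ℝ),
      (∀ j, 0 ≤ l j) ∧ (∀ j, 0 ≤ ν j) ∧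
      (l 0 = l 2 ∧ l 1 = l 3) ∧
      (∀ j : ZMod 4,
        -(l j * Real.log (l j)) + (9/10 : ℝ) * l j
          - (2/5 : ℝ) * (l (j+1) + l (j+3)) - (1/10 : ℝ) * l (j+2) - ν j = 0) ∧
      (0 < ∑ k : ZMod 4, l k ^ 2) ∧ ((∑ k : ZMod 4, l k ^ 2) < 4) ∧
      (∀ j, l j * ν j = 0) := by
  rintro ⟨l, ν, hl, hν, ⟨h02, h13⟩, heq, hpos, hlt, hcomp⟩
  have hsum : ∑ k : ZMod 4, l k ^ 2 = 2 * (l 0 ^ 2 + l 1 ^ 2) := by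
    have hexpand : ∑ k : ZMod 4, l k ^ 2 = l 0 ^ 2 + l 1 ^ 2 + l 2 ^ 2 + l 3 ^ 2 :=
      Fin.sum_univ_four _ -- `ZMod 4` is `Fin 4` by definition
    rw [hexpand, ← h02, ← h13]
    ring
  have e₀ := heq 0
  have e₁ := heq 1
  reduce_mod_char at e₀ e₁
  rw [← h02, ← h13] at e₀ e₁
  exact kkt_pair_not_solvable (hl 0) (hl 1) (hν 0) (hν 1) (by linarith) (by linarith)
    (hcomp 0) (hcomp 1) (by linarith) (by linarith)
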